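/- For every n ∈ ℕ, the q-Euler polynomial expands in the q-Frobenius–Euler basis as E_{n,q}(x) = (1/(1 − λ)) · ∑_{k=0}^{n} C(n,k)_q · ( E_{n−k,q}(1) − λ · E_{n−k,q} ) · H_{k,q}(x|λ), where E_{n−k,q}(1) is the evaluation of E_{n−k,q}(x) at x = 1. -/

import Mathlib

/-!
Write `G_a = ∑ aₙ tⁿ/[n]_q!` for the `q`-exponential generating function of a sequence in `ℂ[x]`.
Evaluating the defining identity of the `q`-Euler polynomials at `x = 1` and `x = 0` gives
`G_{E(1)} (e_q(t) + 1) = 2 e_q(t)` and `G_{E(0)} (e_q(t) + 1) = 2`, hence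
`(G_{E(1)} - λ G_{E(0)}) (e_q(t) + 1) = 2 (e_q(t) - λ)`. Multiplying by `G_H` and using the defining
identity of `H` turns the right-hand side into `2 (1 - λ) e_q(xt) = (1 - λ) G_E (e_q(t) + 1)`, so
cancelling `e_q(t) + 1` yields `(1 - λ) G_E = G_H (G_{E(1)} - λ G_{E(0)})`. The theorem is the
comparison of the coefficients of `tⁿ`, the product of two `q`-exponential generating functions
being the `q`-binomial convolution of their sequences.
-/

open Finset Polynomial

/-- The `q`-integer `[n]_q = (1 - q^n)/(1 - q)` viewed in `ℂ`. -/
noncomputable def qInt (q : ℝ) (n : ℕ) : ℂ := (1 - (q : ℂ) ^ n) / (1 - (q : ℂ))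

/-- The `q`-factorial `[n]_q! = ∏_{j=1}^n [j]_q`. -/
noncomputable def qFact (q : ℝ) (n : ℕ) : ℂ := ∏ j ∈ Finset.range n, qInt q (j + 1)

/-- The `q`-binomial coefficient `[n]_q!/([k]_q! [n-k]_q!)`. -/
noncomputable def qBinom (q : ℝ) (n k : ℕ) : ℂ := qFact q n / (qFact q k * qFact q (n - k))

/-- The formal `q`-exponential `e_q(t) = ∑ t^n/[n]_q!` in `ℂ[x][[t]]`. -/
noncomputable def qExp (q : ℝ) : PowerSeries (Polynomial ℂ) :=
  PowerSeries.mk fun n => Polynomial.C (1 / qFact q n)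

/-- The formal series `e_q(xt) = ∑ x^n t^n/[n]_q!` in `ℂ[x][[t]]`. -/
noncomputable def qExpX (q : ℝ) : PowerSeries (Polynomial ℂ) :=
  PowerSeries.mk fun n => Polynomial.C (1 / qFact q n) * Polynomial.X ^ n

/-- `H : ℕ → ℂ[x]` is the family of `q`-Frobenius-Euler polynomials `H_{n,q}(x|λ)`:
`(∑ H_n t^n/[n]_q!) ⬝ (e_q(t) - λ) = (1 - λ) e_q(xt)` in `ℂ[x][[t]]`. -/
def IsqFrobeniusEuler (q : ℝ) (lam : ℂ) (H : ℕ → Polynomial ℂ) : Prop :=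
  (PowerSeries.mk fun n => Polynomial.C (1 / qFact q n) * H n) *
      (qExp q - PowerSeries.C (Polynomial.C lam)) =
    PowerSeries.C (Polynomial.C (1 - lam)) * qExpX q

/-- `E : ℕ → ℂ[x]` is the family of `q`-Euler polynomials `E_{n,q}(x)`:
`(∑ E_n t^n/[n]_q!) ⬝ (e_q(t) + 1) = 2 e_q(xt)` in `ℂ[x][[t]]`. -/
def IsqEuler (q : ℝ) (E : ℕ → Polynomial ℂ) : Prop :=
  (PowerSeries.mk fun n => Polynomial.C (1 / qFact q n) * E n) * (qExp q + 1) =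
    2 * qExpX q

noncomputable def qEGF (q : ℝ) (a : ℕ → ℂ[X]) : PowerSeries ℂ[X] :=
  PowerSeries.mk fun n => C (1 / qFact q n) * a n

section qFactorial

variable {q : ℝ}

@[simp]
lemma qFact_zero : qFact q 0 = 1 := by
  simp [qFact]

lemma qInt_ne_zero (hq0 : 0 ≤ q) (hq1 : q ≠ 1) {n : ℕ} (hn : n ≠ 0) : qInt q n ≠ 0 := by
  have hpow : (q : ℂ) ^ n ≠ 1 := by
    exact_mod_cast (pow_eq_one_iff_of_nonneg hq0 hn).not.mpr hq1
  exact div_ne_zero (sub_ne_zero.mpr hpow.symm) (sub_ne_zero.mpr (by exact_mod_cast hq1.symm))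

lemma qFact_ne_zero (hq0 : 0 ≤ q) (hq1 : q ≠ 1) (n : ℕ) : qFact q n ≠ 0 :=
  prod_ne_zero_iff.mpr fun j _ => qInt_ne_zero hq0 hq1 j.succ_ne_zero

lemma one_div_qFact_mul_qBinom {n : ℕ} (hn : qFact q n ≠ 0) (k : ℕ) :
    1 / qFact q n * qBinom q n k = 1 / qFact q k * (1 / qFact q (n - k)) := by
  rw [qBinom, one_div_mul_eq_div, div_div_cancel_left' hn, one_div_mul_one_div, one_div]

end qFactorial

section qEGF

variable {q : ℝ}

lemma coeff_qEGF (a : ℕ → ℂ[X]) (n : ℕ) :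
    PowerSeries.coeff n (qEGF q a) = C (1 / qFact q n) * a n :=
  PowerSeries.coeff_mk _ _

lemma qEGF_injective (hq : ∀ n, qFact q n ≠ 0) : Function.Injective (qEGF q) := by
  intro a b hab
  funext n
  have hcoeff := congrArg (PowerSeries.coeff n) hab
  rw [coeff_qEGF, coeff_qEGF] at hcoeff
  exact mul_left_cancel₀ (C_ne_zero.mpr (one_div_ne_zero (hq n))) hcoeff

lemma C_mul_qEGF (c : ℂ) (a : ℕ → ℂ[X]) :
    PowerSeries.C (C c) * qEGF q a = qEGF q fun n => C c * a n := by
  refine PowerSeries.ext fun n => ?_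
  rw [PowerSeries.coeff_C_mul, coeff_qEGF, coeff_qEGF, mul_left_comm]

lemma qEGF_sub (a b : ℕ → ℂ[X]) : qEGF q a - qEGF q b = qEGF q fun n => a n - b n := by
  refine PowerSeries.ext fun n => ?_
  rw [map_sub, coeff_qEGF, coeff_qEGF, coeff_qEGF, mul_sub]

lemma qEGF_mul (hq : ∀ n, qFact q n ≠ 0) (a b : ℕ → ℂ[X]) :
    qEGF q a * qEGF q b =
      qEGF q fun n => ∑ k ∈ range (n + 1), C (qBinom q n k) * a k * b (n - k) := by
  refine PowerSeries.ext fun n => ?_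
  rw [PowerSeries.coeff_mul, Nat.sum_antidiagonal_eq_sum_range_succ
    (fun i j => PowerSeries.coeff i (qEGF q a) * PowerSeries.coeff j (qEGF q b)), coeff_qEGF,
    mul_sum]
  refine sum_congr rfl fun k _ => ?_
  rw [coeff_qEGF, coeff_qEGF]
  calc _ = C (1 / qFact q k * (1 / qFact q (n - k))) * a k * b (n - k) := by rw [C_mul]; ring
    _ = _ := by rw [← one_div_qFact_mul_qBinom (hq n), C_mul]; ring

lemma qEGF_one : qEGF q (fun _ => 1) = qExp q := by
  simp only [qEGF, qExp, mul_one]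

lemma qEGF_zero_pow : qEGF q (fun n => 0 ^ n) = 1 := by
  refine PowerSeries.ext fun n => ?_
  rw [coeff_qEGF, PowerSeries.coeff_one]
  rcases n with _ | n <;> simp

lemma qExpX_eq_qEGF : qExpX q = qEGF q (X ^ ·) := rfl

lemma map_qEGF (φ : ℂ[X] →ₐ[ℂ] ℂ[X]) (a : ℕ → ℂ[X]) :
    PowerSeries.map φ (qEGF q a) = qEGF q fun n => φ (a n) := by
  refine PowerSeries.ext fun n => ?_
  simp only [PowerSeries.coeff_map, coeff_qEGF, map_mul, ← algebraMap_eq, RingHom.coe_coe,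
    AlgHom.commutes]

lemma map_qExp (φ : ℂ[X] →ₐ[ℂ] ℂ[X]) : PowerSeries.map φ (qExp q) = qExp q := by
  rw [← qEGF_one, map_qEGF, map_one]

end qEGF

section Euler

variable {q : ℝ} {E : ℕ → ℂ[X]}

lemma IsqEuler.qEGF_eval (hE : IsqEuler q E) (x : ℂ) :
    qEGF q (fun n => C ((E n).eval x)) * (qExp q + 1) = 2 * qEGF q fun n => C x ^ n := by
  have hE' : qEGF q E * (qExp q + 1) = 2 * qExpX q := hE
  have hmap := congrArg (PowerSeries.map (aeval (C x)).toRingHom) hE'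
  simp only [map_mul, map_add, map_one, map_ofNat] at hmap
  rw [qExpX_eq_qEGF] at hmap
  simpa only [AlgHom.toRingHom_eq_coe, RingHom.coe_coe, map_qEGF, map_qExp, map_pow, aeval_X,
    ← algebraMap_eq, aeval_algebraMap_apply_eq_algebraMap_eval] using hmap

lemma IsqEuler.qEGF_eval_one_sub_mul_eval_zero (hE : IsqEuler q E) (lam : ℂ) :
    qEGF q (fun n => C ((E n).eval 1 - lam * (E n).eval 0)) * (qExp q + 1) =
      2 * (qExp q - PowerSeries.C (C lam)) := by
  have h1 := hE.qEGF_eval 1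
  have h0 := hE.qEGF_eval 0
  simp only [map_one, one_pow, map_zero, qEGF_one, qEGF_zero_pow] at h1 h0
  simp only [C_sub, C_mul, ← qEGF_sub, ← C_mul_qEGF]
  linear_combination h1 - PowerSeries.C (C lam) * h0

lemma qEGF_mul_qEGF_eval_one_sub_mul_eval_zero {lam : ℂ}
    {H : ℕ → ℂ[X]} (hH : IsqFrobeniusEuler q lam H) (hE : IsqEuler q E) :
    qEGF q H * qEGF q (fun n => C ((E n).eval 1 - lam * (E n).eval 0)) =
      PowerSeries.C (C (1 - lam)) * qEGF q E := by
  have hunit : qExp q + 1 ≠ 0 := by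
    intro h
    simpa [qExp] using congrArg PowerSeries.constantCoeff h
  refine mul_right_cancel₀ hunit ?_
  have hH' : qEGF q H * (qExp q - PowerSeries.C (C lam)) =
      PowerSeries.C (C (1 - lam)) * qExpX q := hH
  have hE' : qEGF q E * (qExp q + 1) = 2 * qExpX q := hE
  linear_combination qEGF q H * hE.qEGF_eval_one_sub_mul_eval_zero lam + 2 * hH' -
    PowerSeries.C (C (1 - lam)) * hE'

end Euler

/-- `E_{n,q}(x) = (1/(1-λ)) ∑_{k=0}^n C(n,k)_q (E_{n-k,q}(1) - λ E_{n-k,q}) H_{k,q}(x|λ)`. -/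
theorem qEuler_expansion_in_qFrobeniusEuler_basis
    (q : ℝ) (hq0 : 0 < q) (hq1 : q < 1) (lam : ℂ) (hlam : lam ≠ 1)
    (H : ℕ → Polynomial ℂ) (hH : IsqFrobeniusEuler q lam H)
    (E : ℕ → Polynomial ℂ) (hE : IsqEuler q E) (n : ℕ) :
    E n = Polynomial.C (1 / (1 - lam)) * ∑ k ∈ Finset.range (n + 1),
      Polynomial.C (qBinom q n k *
        ((E (n - k)).eval 1 - lam * (E (n - k)).eval 0)) * H k := by
  have hq := qFact_ne_zero hq0.le hq1.ne
  have hgen := qEGF_mul_qEGF_eval_one_sub_mul_eval_zero hH hE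
  rw [qEGF_mul hq, C_mul_qEGF] at hgen
  have hcoeff := congrFun (qEGF_injective hq hgen) n
  have hlam' : (1 : ℂ) - lam ≠ 0 := sub_ne_zero.mpr hlam.symm
  calc E n = C (1 / (1 - lam)) * (C (1 - lam) * E n) := by
        rw [← mul_assoc, ← C_mul, one_div_mul_cancel hlam', C_1, one_mul]
    _ = _ := by
        rw [← hcoeff]
        congr 1
        exact sum_congr rfl fun k _ => by rw [C_mul]; ring
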